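/- Let K ⊊ M be a proper compact set in a complex manifold M of dimension n ≥ 2 and q ∈ {1,…,n−1}. For any finite family {K''_1,…,K''_l} of members of F^q_K, the intersection K''_1 ∩ … ∩ K''_l also lies in F^q_K. -/

import Mathlib

open Set
open scoped Manifold

noncomputable section

/-- The model space `ℂⁿ`. -/
abbrev En (n : ℕ) : Type := EuclideanSpace ℂ (Fin n)

/-- The open unit polydisc `Δⁿ ⊆ ℂⁿ`. -/
def polydisc (n : ℕ) : Set (En n) := {z | ∀ i, ‖z i‖ < 1}

/-- The Euclidean `(q, n-q)`-Hartogs figure `H^{q,n-q}_{r,s}` in `ℂⁿ`. -/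
def hartogsFigure (n q : ℕ) (r s : ℝ) : Set (En n) :=
  {z | z ∈ polydisc n ∧
    ((∀ i : Fin n, (i : ℕ) < q → ‖z i‖ < r) ∨
     (∃ i : Fin n, q ≤ (i : ℕ) ∧ s < ‖z i‖))}

variable {n : ℕ} {M : Type*} [TopologicalSpace M] [ChartedSpace (En n) M]

/-- `Ω` satisfies the Kontinuitätssatz (relative to an ambient set `V ⊆ M`) with respect to
`(q, n-q)`-Hartogs figures: every injective holomorphic map `Φ : Δⁿ → V ⊆ M` sending the Hartogs
figure into `Ω` sends the whole polydisc into `Ω`. -/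
def QPseudoconvexIn (n q : ℕ) {M : Type*} [TopologicalSpace M] [ChartedSpace (En n) M]
    (V Ω : Set M) : Prop :=
  ∀ r s : ℝ, 0 < r → r < 1 → 0 < s → s < 1 →
    ∀ Φ : En n → M, Set.InjOn Φ (polydisc n) →
      MDifferentiableOn 𝓘(ℂ, En n) 𝓘(ℂ, En n) Φ (polydisc n) →
      Φ '' polydisc n ⊆ V →
      Φ '' hartogsFigure n q r s ⊆ Ω → Φ '' polydisc n ⊆ Ω

/-- `q`-pseudoconvexity in the sense of Rothstein. -/
def QPseudoconvex (n q : ℕ) {M : Type*} [TopologicalSpace M] [ChartedSpace (En n) M]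
    (Ω : Set M) : Prop :=
  QPseudoconvexIn n q Set.univ Ω

/-- A closed set is `q`-pseudoconcave if its complement is `q`-pseudoconvex. -/
def QPseudoconcave (n q : ℕ) {M : Type*} [TopologicalSpace M] [ChartedSpace (En n) M]
    (A : Set M) : Prop :=
  IsClosed A ∧ QPseudoconvex n q Aᶜ

/-- `A` is `q`-pseudoconcave relative to an open subset `V` of `M` (i.e. `A ∩ V` is
`q`-pseudoconcave in the complex manifold `V`). -/
def QPseudoconcaveIn (n q : ℕ) {M : Type*} [TopologicalSpace M] [ChartedSpace (En n) M]
    (V A : Set M) : Prop :=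
  QPseudoconvexIn n q V (V \ A)

/-- The spherical hat `S^k_r × Δ^{n-k}` in `ℂⁿ` (Euclidean norm on the first `k` coordinates). -/
def sphHat (n k : ℕ) (r : ℝ) : Set (En n) :=
  {z | (∑ i : Fin n, if (i : ℕ) < k then ‖z i‖ ^ 2 else 0) = 1 ∧
       (∀ i : Fin n, (i : ℕ) = 0 → r ≤ (z i).re) ∧
       (∀ i : Fin n, k ≤ (i : ℕ) → ‖z i‖ < 1)}

/-- The filled spherical hat `Ŝ^k_r × Δ^{n-k}` in `ℂⁿ`. -/
def filledHat (n k : ℕ) (r : ℝ) : Set (En n) :=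
  {z | (∑ i : Fin n, if (i : ℕ) < k then ‖z i‖ ^ 2 else 0) ≤ 1 ∧
       (∀ i : Fin n, (i : ℕ) = 0 → r ≤ (z i).re) ∧
       (∀ i : Fin n, k ≤ (i : ℕ) → ‖z i‖ < 1)}

/-- The compact set `Ŝ^k_r × closure (Δ^{n-k})` in `ℂⁿ`. -/
def filledHatCl (n k : ℕ) (r : ℝ) : Set (En n) :=
  {z | (∑ i : Fin n, if (i : ℕ) < k then ‖z i‖ ^ 2 else 0) ≤ 1 ∧
       (∀ i : Fin n, (i : ℕ) = 0 → r ≤ (z i).re) ∧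
       (∀ i : Fin n, k ≤ (i : ℕ) → ‖z i‖ ≤ 1)}

/-- The interior of `Ŝ^k_r × Δ^{n-k}` in `ℂⁿ` (giving rise to the filling `Int Ŝ`). -/
def hatInterior (n k : ℕ) (r : ℝ) : Set (En n) :=
  {z | (∑ i : Fin n, if (i : ℕ) < k then ‖z i‖ ^ 2 else 0) < 1 ∧
       (∀ i : Fin n, (i : ℕ) = 0 → r < (z i).re) ∧
       (∀ i : Fin n, k ≤ (i : ℕ) → ‖z i‖ < 1)}

/-- `(S, Ŝ)` together with the filling `F = Int Ŝ` is a spherical hat pair of order `k` in `M`: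
the triple of images of `S^k_r × Δ^{n-k}`, `Ŝ^k_r × Δ^{n-k}` and the interior of the latter under
an injective holomorphic map defined on an open neighborhood of `Ŝ^k_r × closure (Δ^{n-k})`. -/
def IsSphericalHatPair (n k : ℕ) {M : Type*} [TopologicalSpace M] [ChartedSpace (En n) M]
    (S Shat F : Set M) : Prop :=
  ∃ (r : ℝ) (U : Set (En n)) (Φ : En n → M),
    0 < r ∧ r < 1 ∧ IsOpen U ∧ filledHatCl n k r ⊆ U ∧
    Set.InjOn Φ U ∧ MDifferentiableOn 𝓘(ℂ, En n) 𝓘(ℂ, En n) Φ U ∧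
    S = Φ '' sphHat n k r ∧ Shat = Φ '' filledHat n k r ∧ F = Φ '' hatInterior n k r

/-- `K''` is obtained from `K'` by a spherical cut of order `k`. -/
def SphericalCut (n k : ℕ) {M : Type*} [TopologicalSpace M] [ChartedSpace (En n) M]
    (K' K'' : Set M) : Prop :=
  ∃ S Shat F : Set M, IsSphericalHatPair n k S Shat F ∧ S ⊆ K'ᶜ ∧ K'' = K' \ F

/-- The family `F^q_K` of all compact sets obtained from `K` by a finite sequence of
spherical cuts of order `n - q + 1`. -/
def FqK (n q : ℕ) {M : Type*} [TopologicalSpace M] [ChartedSpace (En n) M]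
    (K : Set M) : Set (Set M) :=
  {K'' | Relation.ReflTransGen (SphericalCut n (n - q + 1)) K K''}

open scoped Classical in
/-- The `q`-nucleus of a compact set `K`: the intersection of all members of `F^q_K`;
by convention `n_q(M) = M` if `K` is the whole (compact) manifold. -/
def qNucleus (n q : ℕ) {M : Type*} [TopologicalSpace M] [ChartedSpace (En n) M]
    (K : Set M) : Set M :=
  if K = Set.univ then Set.univ else ⋂ K'' ∈ FqK n q K, K''

/-- The Levi form of a real `C²` function on `ℂⁿ`, as a real quadratic form:
`L_ψ(p; v) = (Hess ψ(p)(v,v) + Hess ψ(p)(iv,iv))/4 = ∑ ∂²ψ/∂z_j∂z̄_k (p) v_j v̄_k`. -/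
def leviForm {n : ℕ} (ψ : En n → ℝ) (p v : En n) : ℝ :=
  (iteratedFDeriv ℝ 2 ψ p ![v, v] + iteratedFDeriv ℝ 2 ψ p ![Complex.I • v, Complex.I • v]) / 4

/-- A `C²` function on a subset of `ℂⁿ` is `q`-convex there if at every point its Levi form is
positive definite on some complex subspace of dimension `n - q + 1` (equivalently, the Levi form
has at most `q - 1` nonpositive eigenvalues). -/
def QConvexOnE (n q : ℕ) (ψ : En n → ℝ) (A : Set (En n)) : Prop :=
  ContDiffOn ℝ 2 ψ A ∧ ∀ p ∈ A, ∃ W : Submodule ℂ (En n),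
    n - q + 1 ≤ Module.finrank ℂ W ∧ ∀ v ∈ W, v ≠ 0 → 0 < leviForm ψ p v

/-- A `C²` function on a subset of `ℂⁿ` is weakly `q`-convex there if at every point its Levi form
is positive semi-definite on some complex subspace of dimension `n - q + 1` (equivalently, the
Levi form has at most `q - 1` negative eigenvalues). -/
def WeaklyQConvexOnE (n q : ℕ) (ψ : En n → ℝ) (A : Set (En n)) : Prop :=
  ContDiffOn ℝ 2 ψ A ∧ ∀ p ∈ A, ∃ W : Submodule ℂ (En n),
    n - q + 1 ≤ Module.finrank ℂ W ∧ ∀ v ∈ W, v ≠ 0 → 0 ≤ leviForm ψ p v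

/-- `ψ : M → ℝ` is `q`-convex on `A ⊆ M`: around every point of `A` there is an injective
holomorphic parametrization by an open subset of `ℂⁿ` with image in `A`, in which `ψ` is
`q`-convex in the Euclidean sense. -/
def QConvexOn (n q : ℕ) {M : Type*} [TopologicalSpace M] [ChartedSpace (En n) M]
    (ψ : M → ℝ) (A : Set M) : Prop :=
  ∀ p ∈ A, ∃ (V : Set (En n)) (Φ : En n → M), IsOpen V ∧ Set.InjOn Φ V ∧
    MDifferentiableOn 𝓘(ℂ, En n) 𝓘(ℂ, En n) Φ V ∧ p ∈ Φ '' V ∧ Φ '' V ⊆ A ∧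
    QConvexOnE n q (ψ ∘ Φ) V

/-- `ψ : M → ℝ` is weakly `q`-convex on `A ⊆ M`. -/
def WeaklyQConvexOn (n q : ℕ) {M : Type*} [TopologicalSpace M] [ChartedSpace (En n) M]
    (ψ : M → ℝ) (A : Set M) : Prop :=
  ∀ p ∈ A, ∃ (V : Set (En n)) (Φ : En n → M), IsOpen V ∧ Set.InjOn Φ V ∧
    MDifferentiableOn 𝓘(ℂ, En n) 𝓘(ℂ, En n) Φ V ∧ p ∈ Φ '' V ∧ Φ '' V ⊆ A ∧
    WeaklyQConvexOnE n q (ψ ∘ Φ) V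

/-- `ψ` is `q`-convex with corners on `A`: near each point of `A` it is the maximum of finitely
many `q`-convex functions on `A`. -/
def QConvexWithCornersOn (n q : ℕ) {M : Type*} [TopologicalSpace M] [ChartedSpace (En n) M]
    (ψ : M → ℝ) (A : Set M) : Prop :=
  ∀ p ∈ A, ∃ V : Set M, IsOpen V ∧ p ∈ V ∧ ∃ (k : ℕ) (f : Fin (k + 1) → M → ℝ),
    (∀ j, QConvexOn n q (f j) A) ∧ ∀ x ∈ V ∩ A, ψ x = ⨆ j, f j x

/-- `ψ` is weakly `q`-convex with corners on `A`. -/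
def WeaklyQConvexWithCornersOn (n q : ℕ) {M : Type*} [TopologicalSpace M]
    [ChartedSpace (En n) M] (ψ : M → ℝ) (A : Set M) : Prop :=
  ∀ p ∈ A, ∃ V : Set M, IsOpen V ∧ p ∈ V ∧ ∃ (k : ℕ) (f : Fin (k + 1) → M → ℝ),
    (∀ j, WeaklyQConvexOn n q (f j) A) ∧ ∀ x ∈ V ∩ A, ψ x = ⨆ j, f j x

/-- `ψ` is an exhaustion function on `Ω`: every sublevel set is relatively compact in `Ω`. -/
def IsExhaustion {M : Type*} [TopologicalSpace M] (ψ : M → ℝ) (Ω : Set M) : Prop :=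
  ∀ c : ℝ, IsCompact (closure {x | x ∈ Ω ∧ ψ x < c}) ∧ closure {x | x ∈ Ω ∧ ψ x < c} ⊆ Ω

end


section Aux
variable {n k : ℕ} {M : Type*} [TopologicalSpace M] [ChartedSpace (En n) M]

lemma sphericalCut_subset {K' K'' : Set M} (h : SphericalCut n k K' K'') : K'' ⊆ K' := by
  obtain ⟨S, Shat, F, _, _, rfl⟩ := h
  exact Set.diff_subset

lemma rtg_cut_subset {K A : Set M}
    (h : Relation.ReflTransGen (SphericalCut n k) K A) : A ⊆ K := by
  induction h with
  | refl => exact subset_rfl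
  | tail _ hbc ih => exact (sphericalCut_subset hbc).trans ih

lemma rtg_cut_mono {K' K'' L : Set M} (hL : L ⊆ K')
    (h : Relation.ReflTransGen (SphericalCut n k) K' K'') :
    Relation.ReflTransGen (SphericalCut n k) L (L ∩ K'') := by
  induction h with
  | refl => rw [Set.inter_eq_left.mpr hL]
  | @tail b c _ hbc ih =>
    obtain ⟨S, Shat, F, hp, hS, rfl⟩ := hbc
    refine ih.tail ⟨S, Shat, F, hp, ?_, ?_⟩
    · exact hS.trans (Set.compl_subset_compl.mpr Set.inter_subset_right)
    · rw [Set.inter_diff_assoc]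

lemma rtg_cut_inter {K A B : Set M}
    (hA : Relation.ReflTransGen (SphericalCut n k) K A)
    (hB : Relation.ReflTransGen (SphericalCut n k) K B) :
    Relation.ReflTransGen (SphericalCut n k) K (A ∩ B) :=
  hA.trans (rtg_cut_mono (rtg_cut_subset hA) hB)

end Aux

/-- For a proper compact set `K ⊊ M`, the intersection of any finite (nonempty)
family of members of `F^q_K` again lies in `F^q_K`. -/
theorem statement6 {n q : ℕ} (hn : 2 ≤ n) (hq1 : 1 ≤ q) (hq2 : q ≤ n - 1)
    {M : Type*} [TopologicalSpace M] [ChartedSpace (En n) M]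
    [IsManifold 𝓘(ℂ, En n) (⊤ : WithTop ℕ∞) M]
    (K : Set M) (hK : IsCompact K) (hKp : K ≠ Set.univ)
    (l : ℕ) (Ks : Fin (l + 1) → Set M) (h : ∀ j, Ks j ∈ FqK n q K) :
    (⋂ j, Ks j) ∈ FqK n q K := by
  induction l with
  | zero =>
    have : (⋂ j, Ks j) = Ks 0 := by
      ext x; simp [Subsingleton.elim _ (0 : Fin 1)]
    rw [this]; exact h 0
  | succ m ih =>
    have hsplit : (⋂ j, Ks j) = Ks 0 ∩ ⋂ j : Fin (m + 1), Ks j.succ := by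
      ext x
      simp only [Set.mem_iInter, Set.mem_inter_iff, Fin.forall_fin_succ]
    rw [hsplit]
    exact rtg_cut_inter (h 0) (ih (fun j => Ks j.succ) (fun j => h j.succ))
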